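/- If a rooted tree T with n nodes has Horton-Strahler number HS(T) ≥ x (for x ≥ 2), then among the n preorder-rotations of its degree sequence, there is some starting index j such that the first tree of the j-rotated forest has Horton-Strahler number ≥ x - 2 and size at most n/4. -/

import Mathlib

/-
A node of Horton-Strahler number `≥ k + 1` either has a child of number `≥ k + 1` or has two
children of number `≥ k`; descending along the first alternative yields two disjoint subtrees
of number `≥ k`. Doing this twice gives four disjoint subtrees of number `≥ x - 2`, and the
smallest of them has at most `n / 4` nodes. Its degree sequence is a contiguous block of that
of `T`, so rotating the sequence to the start of the block puts it in front.
-/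

open scoped ENNReal

/-- Finite rooted ordered trees. -/
inductive RTree : Type where
  | node : List RTree → RTree

namespace RTree

/-- Number of nodes of a rooted tree. -/
def size : RTree → ℕ
  | node ts => 1 + (ts.attach.map (fun x => size x.1)).sum
decreasing_by simp only [RTree.node.sizeOf_spec]; have := List.sizeOf_lt_of_mem x.2; omega

/-- The (standard) Horton-Strahler number: `0` at leaves; at an internal node, the
maximum of the children's values, plus one if the maximum is attained at least twice. -/
def HS : RTree → ℕ
  | node ts =>
    let vals := ts.attach.map (fun x => HS x.1)
    let m := vals.foldr max 0
    m + (if 2 ≤ (vals.filter (fun v => v == m)).length then 1 else 0)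
decreasing_by simp only [RTree.node.sizeOf_spec]; have := List.sizeOf_lt_of_mem x.2; omega

/-- The French Horton-Strahler number: with children values sorted decreasingly as
`v₁ ≥ v₂ ≥ ⋯ ≥ v_k`, it equals `max_i (v_i + (i-1))`. -/
def Fr : RTree → ℕ
  | node ts =>
    let vals := (ts.attach.map (fun x => Fr x.1)).mergeSort (fun a b => decide (b ≤ a))
    (vals.zipIdx.map (fun p => p.1 + p.2)).foldr max 0
decreasing_by simp only [RTree.node.sizeOf_spec]; have := List.sizeOf_lt_of_mem x.2; omega

/-- The Canadian Horton-Strahler number: `v₁ + (r - 1)` where `r` is the number of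
children attaining the maximal value `v₁`. -/
def Can : RTree → ℕ
  | node ts =>
    let vals := ts.attach.map (fun x => Can x.1)
    let m := vals.foldr max 0
    if vals.length = 0 then 0
    else m + ((vals.filter (fun v => v == m)).length - 1)
decreasing_by simp only [RTree.node.sizeOf_spec]; have := List.sizeOf_lt_of_mem x.2; omega

/-- The rigid Horton-Strahler number: max of children's values, plus one if the node has
at least two children and all children attain the maximum. -/
def Rig : RTree → ℕ
  | node ts =>
    let vals := ts.attach.map (fun x => Rig x.1)
    let m := vals.foldr max 0
    if vals.length ≤ 1 then m
    else m + (if vals.all (fun v => v == m) then 1 else 0)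
decreasing_by simp only [RTree.node.sizeOf_spec]; have := List.sizeOf_lt_of_mem x.2; omega

/-- The `k`-ary register function: with children values sorted decreasingly as
`𝒦₁ ≥ ⋯ ≥ 𝒦_ℓ`, it equals `max {𝒦₁, 𝒦_k + 1}` if `ℓ ≥ k` and `𝒦₁` otherwise. -/
def Kreg (k : ℕ) : RTree → ℕ
  | node ts =>
    let vals := (ts.attach.map (fun x => Kreg k x.1)).mergeSort (fun a b => decide (b ≤ a))
    if k ≤ vals.length then max (vals.headD 0) (vals.getD (k - 1) 0 + 1)
    else vals.headD 0
decreasing_by simp only [RTree.node.sizeOf_spec]; have := List.sizeOf_lt_of_mem x.2; omega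

/-- The Galton-Watson weight of a finite tree: the product over all nodes of the
offspring probability of the node's number of children.  For an offspring distribution
`p` summing to one, `∑' t with property P, gwWeight p t` is the probability that the
(almost surely finite) Galton-Watson tree satisfies `P`. -/
noncomputable def gwWeight (p : ℕ → ℝ≥0∞) : RTree → ℝ≥0∞
  | node ts => p ts.length * (ts.attach.map (fun x => gwWeight p x.1)).prod
decreasing_by simp only [RTree.node.sizeOf_spec]; have := List.sizeOf_lt_of_mem x.2; omega

/-- The preorder degree sequence of a tree. -/
def degSeq : RTree → List ℕ
  | node ts => ts.length :: (ts.attach.map (fun x => degSeq x.1)).flatten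
decreasing_by simp only [RTree.node.sizeOf_spec]; have := List.sizeOf_lt_of_mem x.2; omega

/-- Maximal number of children of any node in the tree. -/
def maxDeg : RTree → ℕ
  | node ts => max ts.length ((ts.attach.map (fun x => maxDeg x.1)).foldr max 0)
decreasing_by simp only [RTree.node.sizeOf_spec]; have := List.sizeOf_lt_of_mem x.2; omega

/-- `EmbedsCBT h T`: a complete binary tree of height `h` embeds (in the topological
minor sense) into `T`. -/
inductive EmbedsCBT : ℕ → RTree → Prop where
  | zero (t : RTree) : EmbedsCBT 0 t
  | child (h : ℕ) (ts : List RTree) (t : RTree) (ht : t ∈ ts) (he : EmbedsCBT h t) :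
      EmbedsCBT h (.node ts)
  | split (h : ℕ) (ts : List RTree) (i j : Fin ts.length) (hij : i ≠ j)
      (hi : EmbedsCBT h ts[i]) (hj : EmbedsCBT h ts[j]) :
      EmbedsCBT (h + 1) (.node ts)

/-- `EmbedsCKT k h T`: a complete `k`-ary tree of height `h` embeds into `T`. -/
inductive EmbedsCKT (k : ℕ) : ℕ → RTree → Prop where
  | zero (t : RTree) : EmbedsCKT k 0 t
  | child (h : ℕ) (ts : List RTree) (t : RTree) (ht : t ∈ ts) (he : EmbedsCKT k h t) :
      EmbedsCKT k h (.node ts)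
  | split (h : ℕ) (ts : List RTree) (s : Finset (Fin ts.length)) (hcard : s.card = k)
      (hall : ∀ i ∈ s, EmbedsCKT k h ts[i]) :
      EmbedsCKT k (h + 1) (.node ts)

end RTree

namespace List

theorem exists_pair_sublist_of_two_le_length_filter {α : Type*} {l : List α}
    {p : α → Bool} (h : 2 ≤ (l.filter p).length) :
    ∃ a b, [a, b] <+ l ∧ p a ∧ p b := by
  obtain ⟨a, b, rest, hl⟩ : ∃ a b rest, l.filter p = a :: b :: rest := by
    match l.filter p, h with
    | a :: b :: rest, _ => exact ⟨a, b, rest, rfl⟩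
  have hab : [a, b] <+ l.filter p := hl ▸ by simp
  refine ⟨a, b, hab.trans filter_sublist, ?_, ?_⟩ <;>
    exact (mem_filter.1 (hab.subset (by simp))).2

theorem exists_lt_length_prefix_rotate_of_infix {α : Type*} {l₁ l : List α}
    (h : l₁ <:+: l) (hne : l₁ ≠ []) : ∃ j < l.length, l₁ <+: l.rotate j := by
  obtain ⟨A, B, rfl⟩ := h
  refine ⟨A.length, ?_, ?_⟩
  · simp [Nat.pos_iff_ne_zero, hne]
  · rw [append_assoc, rotate_append_length_eq, append_assoc]
    exact prefix_append _ _

end List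

namespace RTree

@[elab_as_elim, induction_eliminator]
theorem induction {motive : RTree → Prop}
    (node : ∀ ts, (∀ t ∈ ts, motive t) → motive (node ts)) : ∀ T, motive T
  | .node ts => node ts fun t _ => induction node t

@[simp]
theorem size_node (ts : List RTree) : size (node ts) = 1 + (ts.map size).sum := by
  rw [size, List.attach_map_val]

@[simp]
theorem degSeq_node (ts : List RTree) :
    degSeq (node ts) = ts.length :: (ts.map degSeq).flatten := by
  rw [degSeq, List.attach_map_val]

theorem HS_node (ts : List RTree) : HS (node ts) =
    (ts.map HS).foldr max 0 +
      if 2 ≤ ((ts.map HS).filter (· == (ts.map HS).foldr max 0)).length then 1 else 0 := by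
  rw [HS, List.attach_map_val]

theorem degSeq_ne_nil (T : RTree) : T.degSeq ≠ [] := by
  cases T; simp

theorem length_degSeq (T : RTree) : T.degSeq.length = T.size := by
  induction T with
  | node ts ih =>
    simp only [degSeq_node, size_node, List.length_cons, List.length_flatten, List.map_map]
    rw [List.map_congr_left (f := List.length ∘ degSeq) (g := size) ih]
    omega

def IsChild (s : RTree) : RTree → Prop
  | node ts => s ∈ ts

abbrev IsSubtree : RTree → RTree → Prop := Relation.ReflTransGen IsChild

theorem IsChild.size_lt {s t : RTree} (h : IsChild s t) : s.size < t.size := by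
  cases t with
  | node ts =>
    have := List.single_le_sum (fun _ _ => Nat.zero_le _) _ (List.mem_map_of_mem (f := size) h)
    rw [size_node]
    omega

theorem IsChild.degSeq_infix {s t : RTree} (h : IsChild s t) : s.degSeq <:+: t.degSeq := by
  cases t with
  | node ts =>
    rw [degSeq_node]
    exact (List.infix_of_mem_flatten (List.mem_map_of_mem h)).trans (List.suffix_cons _ _).isInfix

theorem IsSubtree.degSeq_infix {s t : RTree} (h : IsSubtree s t) : s.degSeq <:+: t.degSeq := by
  induction h with
  | refl => exact List.infix_refl _
  | tail _ hc ih => exact ih.trans hc.degSeq_infix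

theorem child_or_pair_of_succ_le_HS_node {ts : List RTree} {k : ℕ}
    (h : k + 1 ≤ HS (node ts)) :
    (∃ t ∈ ts, k + 1 ≤ t.HS) ∨ ∃ a b, List.Sublist [a, b] ts ∧ k ≤ a.HS ∧ k ≤ b.HS := by
  by_cases hchild : ∃ t ∈ ts, k + 1 ≤ t.HS
  · exact Or.inl hchild
  right
  push Not at hchild
  rw [HS_node] at h
  set m := (ts.map HS).foldr max 0
  have hm : m ≤ k := List.max_le_of_forall_le _ _ (by simpa [Nat.lt_succ_iff] using hchild)
  split_ifs at h with htwo
  · rw [List.filter_map, List.length_map] at htwo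
    obtain ⟨a, b, hab, ha, hb⟩ := List.exists_pair_sublist_of_two_le_length_filter htwo
    simp only [Function.comp_apply, beq_iff_eq] at ha hb
    exact ⟨a, b, hab, by omega, by omega⟩
  · omega

theorem exists_pair_subtree_of_succ_le_HS {T : RTree} {k : ℕ} (h : k + 1 ≤ T.HS) :
    ∃ t₁ t₂, IsSubtree t₁ T ∧ IsSubtree t₂ T ∧ k ≤ t₁.HS ∧ k ≤ t₂.HS ∧
      t₁.size + t₂.size ≤ T.size := by
  induction T with
  | node ts ih =>
    rcases child_or_pair_of_succ_le_HS_node h with ⟨t, ht, htHS⟩ | ⟨a, b, hab, ha, hb⟩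
    · obtain ⟨t₁, t₂, h₁, h₂, hHS₁, hHS₂, hsize⟩ := ih t ht htHS
      have htT : IsChild t (node ts) := ht
      exact ⟨t₁, t₂, h₁.tail htT, h₂.tail htT, hHS₁, hHS₂, hsize.trans htT.size_lt.le⟩
    · have hsize : a.size + b.size ≤ (ts.map size).sum := by
        simpa using (hab.map size).sum_le_sum fun _ _ => Nat.zero_le _
      refine ⟨a, b, .single (hab.subset (by simp)), .single (hab.subset (by simp)), ha, hb, ?_⟩
      rw [size_node]
      omega

theorem exists_subtree_four_mul_size_le {T : RTree} {k : ℕ} (h : k + 2 ≤ T.HS) :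
    ∃ t, IsSubtree t T ∧ k ≤ t.HS ∧ 4 * t.size ≤ T.size := by
  obtain ⟨t₁, t₂, h₁, h₂, hHS₁, hHS₂, hsize⟩ := exists_pair_subtree_of_succ_le_HS (k := k + 1) h
  obtain ⟨u₁, u₂, g₁, g₂, gHS₁, gHS₂, gsize⟩ := exists_pair_subtree_of_succ_le_HS hHS₁
  obtain ⟨u₃, u₄, g₃, g₄, gHS₃, gHS₄, gsize'⟩ := exists_pair_subtree_of_succ_le_HS hHS₂
  have hsmallest : 4 * u₁.size ≤ T.size ∨ 4 * u₂.size ≤ T.size ∨ 4 * u₃.size ≤ T.size ∨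
      4 * u₄.size ≤ T.size := by
    omega
  rcases hsmallest with h | h | h | h
  exacts [⟨u₁, g₁.trans h₁, gHS₁, h⟩, ⟨u₂, g₂.trans h₁, gHS₂, h⟩,
    ⟨u₃, g₃.trans h₂, gHS₃, h⟩, ⟨u₄, g₄.trans h₂, gHS₄, h⟩]

end RTree

/-- if `HS(T) ≥ x` (`x ≥ 2`) for a tree of size `n`, then some rotation of
the preorder degree sequence of `T` starts with a complete tree of Horton-Strahler
number `≥ x - 2` and size `≤ n/4`. -/
theorem rotation_small_subtree (T : RTree) (n x : ℕ) (hn : T.size = n) (hx : 2 ≤ x)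
    (hHS : x ≤ T.HS) :
    ∃ j < n, ∃ t : RTree,
      RTree.degSeq t <+: (T.degSeq.rotate j) ∧ x - 2 ≤ t.HS ∧ 4 * t.size ≤ n := by
  subst hn
  obtain ⟨t, hsub, htHS, htsize⟩ :=
    RTree.exists_subtree_four_mul_size_le (T := T) (k := x - 2) (by omega)
  obtain ⟨j, hj, hprefix⟩ :=
    List.exists_lt_length_prefix_rotate_of_infix hsub.degSeq_infix t.degSeq_ne_nil
  exact ⟨j, T.length_degSeq ▸ hj, t, hprefix, htHS, htsize⟩
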